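/- On the domain Ω = ℂ∖(−∞,1], writing J(z) = J₊⁻¹(z) (so that J(z) avoids the nonpositive real axis for z ∈ Ω), the following derivative identities hold for every z ∈ Ω: (i) the derivative of z ↦ −Log(J(z)) equals 1/((z−1)^{1/2}·(z+1)^{1/2}), where Log is the principal branch of the complex logarithm; (ii) the derivative of z ↦ J(z)²/4 − (1/2)·Log(J(z)) equals J(z); and (iii) for every integer k ≥ 2, the derivative of z ↦ (1/2)·( J(z)^{k+1}/(k+1) − J(z)^{k−1}/(k−1) ) equals J(z)^k. -/

import Mathlib

/-!
Write `s(z) = (z-1)^{1/2} (z+1)^{1/2}`, a branch of `√(z²-1)`, so that `J = z - s` and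
`J (z + s) = 1`. Hence `J ≠ 0`, `J + J⁻¹ = 2z`, and differentiating gives the Joukowsky-type
equation `J' = -J/s`, i.e. `J' (J² - 1) = 2J²`. That equation alone turns `J^k` into the derivative
of `½ (J^{k+1}/(k+1) - J^{k-1}/(k-1))` (and of `J²/4 - ½ Log J` for `k = 1`), provided `Log` is
holomorphic at `J`, which holds because `J + J⁻¹ = 2z` would be real `≤ 0` if `J` were.
-/

open Filter Set

/-- The inverse Joukowsky transform mapping the slit plane to the unit disk,
`J₊⁻¹(z) = z - (z-1)^{1/2} (z+1)^{1/2}` with principal-branch square roots. -/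
noncomputable def Jinv (z : ℂ) : ℂ :=
  z - (z - 1) ^ ((1 : ℂ) / 2) * (z + 1) ^ ((1 : ℂ) / 2)

open Complex

section JoukowskyEquation

variable {f : ℂ → ℂ} {f' z : ℂ}

theorem HasDerivAt.sq_div_four_sub_half_log (hf : HasDerivAt f f' z) (hslit : f z ∈ slitPlane)
    (hode : f' * (f z ^ 2 - 1) = 2 * f z ^ 2) :
    HasDerivAt (fun w => f w ^ 2 / 4 - 1 / 2 * Complex.log (f w)) (f z) z := by
  have hf0 : f z ≠ 0 := slitPlane_ne_zero hslit
  refine (((hf.pow 2).div_const 4).sub ((hf.clog hslit).const_mul (1 / 2))).congr_deriv ?_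
  field_simp
  linear_combination 4 * hode

theorem HasDerivAt.half_pow_succ_div_sub_pow_pred_div (hf : HasDerivAt f f' z)
    (hode : f' * (f z ^ 2 - 1) = 2 * f z ^ 2) {k : ℕ} (hk : 2 ≤ k) :
    HasDerivAt (fun w => 1 / 2 * (f w ^ (k + 1) / ((k : ℂ) + 1) - f w ^ (k - 1) / ((k : ℂ) - 1)))
      (f z ^ k) z := by
  obtain ⟨n, rfl⟩ := Nat.exists_eq_add_of_le' hk
  rw [show n + 2 - 1 = n + 1 from rfl]
  refine ((((hf.pow (n + 3)).div_const _).sub ((hf.pow (n + 1)).div_const _)).const_mul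
    (1 / 2)).congr_deriv ?_
  have hsucc : (↑(n + 2) : ℂ) + 1 ≠ 0 := by norm_cast
  have hpred' : (↑(n + 2) : ℂ) - 1 = n + 1 := by push_cast; ring
  rw [hpred']
  have hn : (n : ℂ) + 1 ≠ 0 := by norm_cast
  field_simp
  push_cast
  linear_combination ((n : ℂ) + 1) * ((n : ℂ) + 3) * f z ^ n * hode

end JoukowskyEquation

theorem HasDerivAt.cpow_one_div_two {f : ℂ → ℂ} {f' x : ℂ} (hf : HasDerivAt f f' x)
    (hx : f x ∈ slitPlane) :
    HasDerivAt (fun w => f w ^ ((1 : ℂ) / 2)) (f' / (2 * f x ^ ((1 : ℂ) / 2))) x := by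
  refine (hf.cpow_const hx).congr_deriv ?_
  rw [show (1 : ℂ) / 2 - 1 = -(1 / 2) by norm_num, cpow_neg]
  ring

theorem cpow_one_div_two_mul_self (x : ℂ) : x ^ ((1 : ℂ) / 2) * x ^ ((1 : ℂ) / 2) = x := by
  rw [← sq, one_div]
  exact cpow_ofNat_inv_pow x 2

theorem cpow_one_div_two_ne_zero {x : ℂ} (hx : x ≠ 0) : x ^ ((1 : ℂ) / 2) ≠ 0 :=
  left_ne_zero_of_mul (by rwa [cpow_one_div_two_mul_self])

theorem sub_one_mem_slitPlane_iff {z : ℂ} :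
    z - 1 ∈ slitPlane ↔ z ∉ {w : ℂ | w.im = 0 ∧ w.re ≤ 1} := by
  simp only [mem_slitPlane_iff, sub_re, one_re, sub_im, one_im, sub_zero, Set.mem_ofPred_eq,
    not_and, not_le]
  rw [sub_pos, or_iff_not_imp_right, not_not]

theorem add_one_mem_slitPlane_of_sub_one {z : ℂ} (hz : z - 1 ∈ slitPlane) :
    z + 1 ∈ slitPlane := by
  rw [mem_slitPlane_iff] at hz ⊢
  simp only [sub_re, one_re, sub_im, one_im, sub_zero, add_re, add_im, add_zero] at hz ⊢
  exact hz.imp (fun hre => by linarith) id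

noncomputable def sqrtSqSubOne (z : ℂ) : ℂ := (z - 1) ^ ((1 : ℂ) / 2) * (z + 1) ^ ((1 : ℂ) / 2)

theorem Jinv_eq (z : ℂ) : Jinv z = z - sqrtSqSubOne z := rfl

theorem sqrtSqSubOne_sq (z : ℂ) : sqrtSqSubOne z ^ 2 = z ^ 2 - 1 := by
  rw [sqrtSqSubOne, mul_pow, sq, sq, cpow_one_div_two_mul_self, cpow_one_div_two_mul_self]
  ring

theorem sqrtSqSubOne_ne_zero {z : ℂ} (hz : z - 1 ∈ slitPlane) : sqrtSqSubOne z ≠ 0 := by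
  have hprod : (z - 1) * (z + 1) ≠ 0 :=
    mul_ne_zero (slitPlane_ne_zero hz) (slitPlane_ne_zero (add_one_mem_slitPlane_of_sub_one hz))
  rw [← pow_ne_zero_iff two_ne_zero, sqrtSqSubOne_sq]
  convert hprod using 1
  ring

theorem hasDerivAt_sqrtSqSubOne {z : ℂ} (hz : z - 1 ∈ slitPlane) :
    HasDerivAt sqrtSqSubOne (z / sqrtSqSubOne z) z := by
  have hz' := add_one_mem_slitPlane_of_sub_one hz
  have ha := ((hasDerivAt_id z).sub_const 1).cpow_one_div_two hz
  have hb := ((hasDerivAt_id z).add_const 1).cpow_one_div_two hz'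
  have ha0 := cpow_one_div_two_ne_zero (slitPlane_ne_zero hz)
  have hb0 := cpow_one_div_two_ne_zero (slitPlane_ne_zero hz')
  refine (ha.mul hb).congr_deriv ?_
  simp only [sqrtSqSubOne, id]
  field_simp
  linear_combination cpow_one_div_two_mul_self (z - 1) + cpow_one_div_two_mul_self (z + 1)

theorem Jinv_mul_add_sqrtSqSubOne (z : ℂ) : Jinv z * (z + sqrtSqSubOne z) = 1 := by
  rw [Jinv_eq]
  linear_combination -sqrtSqSubOne_sq z

theorem Jinv_ne_zero (z : ℂ) : Jinv z ≠ 0 :=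
  left_ne_zero_of_mul_eq_one (Jinv_mul_add_sqrtSqSubOne z)

theorem Jinv_add_inv (z : ℂ) : Jinv z + (Jinv z)⁻¹ = 2 * z := by
  rw [inv_eq_of_mul_eq_one_right (Jinv_mul_add_sqrtSqSubOne z), Jinv_eq]
  ring

theorem Jinv_mem_slitPlane {z : ℂ} (hz : z - 1 ∈ slitPlane) : Jinv z ∈ slitPlane := by
  rw [mem_slitPlane_iff_not_le_zero]
  intro hJ
  obtain ⟨hre, him⟩ := nonpos_iff.1 hJ
  set t := (Jinv z).re
  have hJt : Jinv z = t := Complex.ext rfl (by simpa using him)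
  have hzt : z - 1 = (((t + t⁻¹) / 2 - 1 : ℝ) : ℂ) := by
    push_cast
    rw [← hJt]
    linear_combination -(Jinv_add_inv z) / 2
  rw [hzt, ofReal_mem_slitPlane] at hz
  linarith [inv_nonpos.2 hre]

theorem hasDerivAt_Jinv {z : ℂ} (hz : z - 1 ∈ slitPlane) :
    HasDerivAt Jinv (-Jinv z / sqrtSqSubOne z) z := by
  have hs := sqrtSqSubOne_ne_zero hz
  refine ((hasDerivAt_id z).sub (hasDerivAt_sqrtSqSubOne hz)).congr_deriv ?_
  rw [Jinv_eq]
  field_simp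
  ring

theorem Jinv_deriv_mul_sq_sub_one {z : ℂ} (hz : z - 1 ∈ slitPlane) :
    -Jinv z / sqrtSqSubOne z * (Jinv z ^ 2 - 1) = 2 * Jinv z ^ 2 := by
  have hs := sqrtSqSubOne_ne_zero hz
  rw [Jinv_eq]
  field_simp
  linear_combination (z - sqrtSqSubOne z) * sqrtSqSubOne_sq z

theorem hasDerivAt_neg_log_Jinv {z : ℂ} (hz : z - 1 ∈ slitPlane) :
    HasDerivAt (fun w => -log (Jinv w)) (1 / sqrtSqSubOne z) z := by
  have hs := sqrtSqSubOne_ne_zero hz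
  have hJ := Jinv_ne_zero z
  refine ((hasDerivAt_Jinv hz).clog (Jinv_mem_slitPlane hz)).neg.congr_deriv ?_
  field_simp

/-- Antiderivative identities for powers of `J = J₊⁻¹` on the domain
`Ω = ℂ∖(-∞,1]`:
(i) `d/dz (-Log J(z)) = 1/((z-1)^{1/2}(z+1)^{1/2})`,
(ii) `d/dz (J(z)²/4 - ½ Log J(z)) = J(z)`,
(iii) `d/dz (½ (J(z)^{k+1}/(k+1) - J(z)^{k-1}/(k-1))) = J(z)^k` for `k ≥ 2`. -/
theorem Jinv_antiderivatives (z : ℂ) (hz : z ∉ {w : ℂ | w.im = 0 ∧ w.re ≤ 1}) :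
    HasDerivAt (fun w : ℂ => -Complex.log (Jinv w))
      (1 / ((z - 1) ^ ((1 : ℂ) / 2) * (z + 1) ^ ((1 : ℂ) / 2))) z ∧
    HasDerivAt (fun w : ℂ => (Jinv w) ^ 2 / 4 - (1 / 2) * Complex.log (Jinv w))
      (Jinv z) z ∧
    ∀ k : ℕ, 2 ≤ k →
      HasDerivAt (fun w : ℂ =>
          (1 / 2) * ((Jinv w) ^ (k + 1) / ((k : ℂ) + 1) - (Jinv w) ^ (k - 1) / ((k : ℂ) - 1)))
        ((Jinv z) ^ k) z := by
  have hz' := sub_one_mem_slitPlane_iff.2 hz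
  have hJ := hasDerivAt_Jinv hz'
  have hode := Jinv_deriv_mul_sq_sub_one hz'
  exact ⟨hasDerivAt_neg_log_Jinv hz', hJ.sq_div_four_sub_half_log (Jinv_mem_slitPlane hz') hode,
    fun k hk => hJ.half_pow_succ_div_sub_pow_pred_div hode hk⟩
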